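/- For every natural number n, parameters u_ℓ = (θ_ℓ, φ_ℓ, λ_ℓ) ∈ ℝ³ for ℓ = 0,…,n−1, every coin value k ∈ ZMod 2, and all n-bit strings J' and J, the matrix entry of the squared walk operator satisfies (U²)_{(k,J'),(0,J)} = ∑_{I : I_{n−1} = k} f(I, I ⊕ J' ⊕ J), where the sum is over all n-bit strings I whose (n−1)-th bit equals k, and f(I,K) := (∏_{ℓ=0}^{n−1} [U3(u_ℓ)]_{I_ℓ, I_{ℓ−1}}) · (∏_{ℓ=0}^{n−1} [U3(u_ℓ)]_{K_ℓ, K_{ℓ−1}}) with the conventions I_{−1} = K_{n−1} and K_{−1} = 0. -/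

import Mathlib

/-- The single-qubit rotation gate `U3(θ,φ,λ)`, indexed by `ZMod 2`. -/
noncomputable def U3 (θ φ lam : ℝ) : Matrix (ZMod 2) (ZMod 2) ℂ :=
  Matrix.of fun μ ν =>
    if μ = 0 then
      (if ν = 0 then (Real.cos (θ / 2) : ℂ)
       else -Complex.exp (Complex.I * lam) * (Real.sin (θ / 2) : ℂ))
    else
      (if ν = 0 then Complex.exp (Complex.I * φ) * (Real.sin (θ / 2) : ℂ)
       else Complex.exp (Complex.I * (lam + φ)) * (Real.cos (θ / 2) : ℂ))

/-- Coin rotation: `U3` acting on the coin qubit, identity on the graph qubits. -/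
noncomputable def coinR (n : ℕ) (u : ℝ × ℝ × ℝ) :
    Matrix (ZMod 2 × (Fin n → ZMod 2)) (ZMod 2 × (Fin n → ZMod 2)) ℂ :=
  Matrix.of fun p q => if p.2 = q.2 then U3 u.1 u.2.1 u.2.2 p.1 q.1 else 0

/-- Controlled flip of the `k`-th graph qubit, controlled by the coin qubit. -/
def flipC (n : ℕ) (k : Fin n) :
    Matrix (ZMod 2 × (Fin n → ZMod 2)) (ZMod 2 × (Fin n → ZMod 2)) ℂ :=
  Matrix.of fun p q =>
    if p.1 = q.1 ∧ p.2 = q.2 + q.1 • (Pi.single k 1 : Fin n → ZMod 2) then 1 else 0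

/-- One quantum-walk evolution `U = W_{n-1} ⋯ W_1 W_0`, where `W_k = C_k · R_k`. -/
noncomputable def walkU (n : ℕ) (u : Fin n → ℝ × ℝ × ℝ) :
    Matrix (ZMod 2 × (Fin n → ZMod 2)) (ZMod 2 × (Fin n → ZMod 2)) ℂ :=
  ((List.finRange n).reverse.map (fun k => flipC n k * coinR n (u k))).prod

/-- The bit `K_{ℓ-1}` of an `n`-bit string, with a prescribed value `d` for `K_{-1}`. -/
def prevBitD (n : ℕ) (K : Fin n → ZMod 2) (d : ZMod 2) (ℓ : Fin n) : ZMod 2 :=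
  if 0 < (ℓ : ℕ) then K ⟨(ℓ : ℕ) - 1, lt_of_le_of_lt (Nat.sub_le _ _) ℓ.isLt⟩ else d

/-- The bit `I_{n-1}` of an `n`-bit string, with the convention `I_{-1} = 0` (for `n = 0`). -/
def lastBit (n : ℕ) (I : Fin n → ZMod 2) : ZMod 2 :=
  if h : 0 < n then I ⟨n - 1, Nat.sub_lt h Nat.one_pos⟩ else 0

/-- The two-evolution amplitude
`f(I,K) = (∏_ℓ [U3(u_ℓ)]_{I_ℓ,I_{ℓ-1}}) (∏_ℓ [U3(u_ℓ)]_{K_ℓ,K_{ℓ-1}})`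
with the conventions `I_{-1} = K_{n-1}` and `K_{-1} = 0`. -/
noncomputable def fTwo (n : ℕ) (u : Fin n → ℝ × ℝ × ℝ) (I K : Fin n → ZMod 2) : ℂ :=
  (∏ ℓ : Fin n,
      U3 (u ℓ).1 (u ℓ).2.1 (u ℓ).2.2 (I ℓ) (prevBitD n I (lastBit n K) ℓ)) *
  (∏ ℓ : Fin n,
      U3 (u ℓ).1 (u ℓ).2.1 (u ℓ).2.2 (K ℓ) (prevBitD n K 0 ℓ))

/-!
Each factor `W_ℓ` flips graph bit `ℓ` exactly when the rotated coin is `1`, so one application of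
`U` can only take `(c, J)` to `(c', J + D)`, where `D_ℓ` is the coin value after step `ℓ`. Hence
`c' = D_{n-1}`, and the amplitude is `∏_ℓ [U3(u_ℓ)]_{D_ℓ, D_{ℓ-1}}` with `D_{-1} = c`.
In `U²` the intermediate state `(b, J + K)` therefore has `b = K_{n-1}`, and the first application
follows the pattern `I = J' + J + K`, whose last bit must be `k`.
-/

section CharTwoPi

variable {ι R : Type*} [Ring R] [CharP R 2]

lemma pi_charTwo_add_self (a : ι → R) : a + a = 0 :=
  funext fun i => CharTwo.add_self_eq_zero (a i)

lemma pi_charTwo_add_add_cancel_right (a b : ι → R) : a + b + b = a := by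
  rw [add_assoc, pi_charTwo_add_self, add_zero]

lemma pi_charTwo_eq_add_iff (a b c : ι → R) : a = b + c ↔ b = a + c := by
  constructor <;> rintro rfl <;> exact (pi_charTwo_add_add_cancel_right _ _).symm

end CharTwoPi

section Walk

variable {n : ℕ}

lemma flipC_mul_coinR_apply (k : Fin n) (v : ℝ × ℝ × ℝ) (c' c : ZMod 2)
    (J' J : Fin n → ZMod 2) :
    (flipC n k * coinR n v) (c', J') (c, J) =
      if J = J' + c' • Pi.single k 1 then U3 v.1 v.2.1 v.2.2 c' c else 0 := by
  simp [Matrix.mul_apply, flipC, coinR, Fintype.sum_prod_type, ite_and, pi_charTwo_eq_add_iff J']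

/-- `K_{m-1}` at a natural index `m`, with `d` standing for `K_{-1}` (and, as a junk value,
for `m > n`). -/
def prevBit (K : Fin n → ZMod 2) (d : ZMod 2) (m : ℕ) : ZMod 2 :=
  if h : 0 < m ∧ m - 1 < n then K ⟨m - 1, h.2⟩ else d

lemma prevBitD_eq_prevBit (K : Fin n → ZMod 2) (d : ZMod 2) (ℓ : Fin n) :
    prevBitD n K d ℓ = prevBit K d ℓ := by
  unfold prevBitD prevBit
  split_ifs <;> first | rfl | omega

lemma prevBit_succ (K : Fin n → ZMod 2) (d : ZMod 2) (k : Fin n) :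
    prevBit K d (k + 1) = K k := by
  simp [prevBit]

lemma prevBit_congr {K K' : Fin n → ZMod 2} (d : ZMod 2) {m j : ℕ} (hj : j ≤ m)
    (h : ∀ ℓ : Fin n, (ℓ : ℕ) < m → K ℓ = K' ℓ) : prevBit K d j = prevBit K' d j := by
  unfold prevBit
  split_ifs with hj0
  · exact h _ (show j - 1 < m by omega)
  · rfl

lemma lastBit_eq_prevBit (K : Fin n → ZMod 2) : lastBit n K = prevBit K 0 n := by
  unfold lastBit prevBit
  split_ifs <;> first | rfl | omega

lemma prevBit_lastBit (I K : Fin n → ZMod 2) : prevBit I (lastBit n K) n = lastBit n I := by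
  unfold lastBit prevBit
  split_ifs <;> first | rfl | omega

noncomputable def walkFactor (u : Fin n → ℝ × ℝ × ℝ) (k : Fin n) :
    Matrix (ZMod 2 × (Fin n → ZMod 2)) (ZMod 2 × (Fin n → ZMod 2)) ℂ :=
  flipC n k * coinR n (u k)

noncomputable def walkPrefix (u : Fin n → ℝ × ℝ × ℝ) (m : ℕ) :
    Matrix (ZMod 2 × (Fin n → ZMod 2)) (ZMod 2 × (Fin n → ZMod 2)) ℂ :=
  (((List.finRange n).take m).reverse.map (walkFactor u)).prod

lemma walkPrefix_zero (u : Fin n → ℝ × ℝ × ℝ) : walkPrefix u 0 = 1 := rfl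

lemma walkPrefix_succ (u : Fin n → ℝ × ℝ × ℝ) (k : Fin n) :
    walkPrefix u (k + 1) = walkFactor u k * walkPrefix u k := by
  simp [walkPrefix, List.take_add_one]

lemma walkPrefix_self (u : Fin n → ℝ × ℝ × ℝ) : walkPrefix u n = walkU n u := by
  rw [walkPrefix, walkU, List.take_of_length_le (by simp)]
  rfl

noncomputable def pathAmp (u : Fin n → ℝ × ℝ × ℝ) (D : Fin n → ZMod 2) (c : ZMod 2)
    (m : ℕ) : ℂ :=
  ∏ ℓ ∈ Finset.univ.filter (fun ℓ : Fin n => (ℓ : ℕ) < m),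
    U3 (u ℓ).1 (u ℓ).2.1 (u ℓ).2.2 (D ℓ) (prevBit D c ℓ)

lemma pathAmp_succ (u : Fin n → ℝ × ℝ × ℝ) (D : Fin n → ZMod 2) (c : ZMod 2) (k : Fin n) :
    pathAmp u D c (k + 1) =
      U3 (u k).1 (u k).2.1 (u k).2.2 (D k) (prevBit D c k) * pathAmp u D c k := by
  have hinsert : Finset.univ.filter (fun ℓ : Fin n => (ℓ : ℕ) < k + 1) =
      insert k (Finset.univ.filter (fun ℓ : Fin n => (ℓ : ℕ) < k)) := by
    ext ℓ
    simp only [Finset.mem_filter, Finset.mem_univ, true_and, Finset.mem_insert, Fin.ext_iff]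
    omega
  rw [pathAmp, hinsert, Finset.prod_insert (by simp)]
  rfl

lemma pathAmp_congr (u : Fin n → ℝ × ℝ × ℝ) {D D' : Fin n → ZMod 2} (c : ZMod 2) {m : ℕ}
    (h : ∀ ℓ : Fin n, (ℓ : ℕ) < m → D ℓ = D' ℓ) : pathAmp u D c m = pathAmp u D' c m := by
  refine Finset.prod_congr rfl fun ℓ hℓ => ?_
  rw [Finset.mem_filter] at hℓ
  rw [h ℓ hℓ.2, prevBit_congr c hℓ.2.le h]

lemma pathAmp_self (u : Fin n → ℝ × ℝ × ℝ) (D : Fin n → ZMod 2) (c : ZMod 2) :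
    pathAmp u D c n = ∏ ℓ : Fin n, U3 (u ℓ).1 (u ℓ).2.1 (u ℓ).2.2 (D ℓ) (prevBit D c ℓ) := by
  simp [pathAmp]

lemma forall_le_add_smul_single_eq_zero_iff (D : Fin n → ZMod 2) (x : ZMod 2) (k : Fin n) :
    (∀ ℓ : Fin n, (k : ℕ) ≤ ℓ → (D + x • Pi.single k 1 : Fin n → ZMod 2) ℓ = 0) ↔
      (∀ ℓ : Fin n, (k : ℕ) + 1 ≤ ℓ → D ℓ = 0) ∧ x = D k := by
  have hentry : ∀ ℓ : Fin n,
      (D + x • Pi.single k 1 : Fin n → ZMod 2) ℓ = if ℓ = k then D ℓ + x else D ℓ := by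
    intro ℓ
    by_cases hℓ : ℓ = k <;> simp [hℓ]
  simp only [hentry]
  constructor
  · intro h
    refine ⟨fun ℓ hℓ => by simpa [Fin.ne_of_gt hℓ] using h ℓ (Nat.le_of_succ_le hℓ), ?_⟩
    exact (CharTwo.add_eq_zero.mp (by simpa using h k le_rfl)).symm
  · rintro ⟨h, rfl⟩ ℓ hℓ
    split_ifs with he
    · rw [he]
      exact CharTwo.add_self_eq_zero (D k)
    · exact h ℓ (by have := Fin.val_ne_of_ne he; omega)

lemma walkPrefix_apply (u : Fin n → ℝ × ℝ × ℝ) {m : ℕ} (hm : m ≤ n) (c' c : ZMod 2)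
    (J D : Fin n → ZMod 2) :
    walkPrefix u m (c', J + D) (c, J) =
      if (∀ ℓ : Fin n, m ≤ (ℓ : ℕ) → D ℓ = 0) ∧ c' = prevBit D c m then pathAmp u D c m
      else 0 := by
  induction m generalizing c' D with
  | zero =>
    simp [walkPrefix_zero, Matrix.one_apply, pathAmp, prevBit, funext_iff, and_comm]
  | succ m ih =>
    obtain ⟨k, rfl⟩ : ∃ k : Fin n, (k : ℕ) = m := ⟨⟨m, hm⟩, rfl⟩
    have hagree : ∀ ℓ : Fin n, (ℓ : ℕ) < k →
        (D + c' • Pi.single k 1 : Fin n → ZMod 2) ℓ = D ℓ := fun ℓ hℓ => by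
      simp [Fin.ne_of_lt hℓ]
    have hcollapse : walkPrefix u (k + 1) (c', J + D) (c, J) =
        ∑ b, U3 (u k).1 (u k).2.1 (u k).2.2 c' b *
          walkPrefix u k (b, J + (D + c' • Pi.single k 1)) (c, J) := by
      rw [walkPrefix_succ, Matrix.mul_apply, Fintype.sum_prod_type]
      simp [walkFactor, flipC_mul_coinR_apply, ite_mul, Finset.sum_ite_eq', add_assoc]
    rw [hcollapse]
    simp only [ih (Nat.le_of_succ_le hm), prevBit_congr c le_rfl hagree,
      pathAmp_congr u c hagree, forall_le_add_smul_single_eq_zero_iff, prevBit_succ, pathAmp_succ]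
    by_cases hcond : (∀ ℓ : Fin n, (k : ℕ) + 1 ≤ ℓ → D ℓ = 0) ∧ c' = D k
    · rw [if_pos hcond, Finset.sum_eq_single (prevBit D c k), if_pos ⟨hcond, rfl⟩, hcond.2]
      · intro b _ hb
        rw [if_neg fun h => hb h.2, mul_zero]
      · simp
    · simp only [hcond, false_and, if_false, mul_zero, Finset.sum_const_zero]

lemma walkU_apply (u : Fin n → ℝ × ℝ × ℝ) (c' c : ZMod 2) (J' J : Fin n → ZMod 2) :
    walkU n u (c', J') (c, J) =
      if c' = prevBit (J' + J) c n then pathAmp u (J' + J) c n else 0 := by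
  have hJ' : J' = J + (J' + J) := by rw [add_comm J, pi_charTwo_add_add_cancel_right]
  have hvan : ∀ ℓ : Fin n, n ≤ (ℓ : ℕ) → (J' + J) ℓ = 0 := fun ℓ h => absurd ℓ.isLt (by omega)
  rw [← walkPrefix_self]
  conv_lhs => rw [hJ']
  rw [walkPrefix_apply u le_rfl, if_congr (and_iff_right hvan) rfl rfl]

lemma fTwo_eq_pathAmp_mul (u : Fin n → ℝ × ℝ × ℝ) (I K : Fin n → ZMod 2) :
    fTwo n u I K = pathAmp u I (lastBit n K) n * pathAmp u K 0 n := by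
  simp only [fTwo, pathAmp_self, prevBitD_eq_prevBit]

end Walk

theorem stmt_11 (n : ℕ) (u : Fin n → ℝ × ℝ × ℝ) (k : ZMod 2) (J' J : Fin n → ZMod 2) :
    (walkU n u ^ 2) (k, J') (0, J) =
      ∑ I ∈ Finset.univ.filter (fun I : Fin n → ZMod 2 => lastBit n I = k),
        fTwo n u I (I + J' + J) := by
  rw [sq, Matrix.mul_apply, Fintype.sum_prod_type_right, Finset.sum_filter]
  refine Fintype.sum_equiv (Equiv.addLeft J') _ _ fun M => ?_
  simp only [Equiv.coe_addLeft, walkU_apply, add_comm J' M, mul_ite, mul_zero,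
    Finset.sum_ite_eq', Finset.mem_univ, if_true]
  rw [pi_charTwo_add_add_cancel_right, ← lastBit_eq_prevBit, prevBit_lastBit, fTwo_eq_pathAmp_mul,
    ite_mul, zero_mul]
  exact if_congr eq_comm rfl rfl
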